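/- For 0 < m < 1, the matrix q(ξ) = (2μ|ξ|)^{-1/2}·(E - (1 - √(1-m))·diag(L(ξ),1)) satisfies q(ξ)² = (1/(2μ|ξ|))·(E - m·diag(L(ξ),1)); i.e. q(ξ) is a square root of the single layer principal symbol. -/

import Mathlib

/-!
`D = diag(L(ξ), 1)` is an orthogonal projection, so `(1 - t D)² = 1 - (2t - t²) D`, and
`t = 1 - √(1 - m)` is the root of `2t - t² = m` that keeps `1 - t D` positive definite.
The scalar factor `(2μ|ξ|)^{-1/2}` squares to `1 / (2μ|ξ|)`.
-/

open Matrix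

theorem Real.rpow_neg_one_half_sq {x : ℝ} (hx : 0 ≤ x) :
    (x ^ (-(1 : ℝ) / 2)) ^ 2 = 1 / x := by
  rw [← Real.rpow_natCast, ← Real.rpow_mul hx]
  norm_num [Real.rpow_neg_one]

theorem one_sub_smul_mul_self_of_isIdempotentElem {K A : Type*} [CommRing K] [Ring A]
    [Algebra K A] {D : A} (hD : IsIdempotentElem D) {s m : K} (hs : s ^ 2 = 1 - m) :
    (1 - (1 - s) • D) * (1 - (1 - s) • D) = 1 - m • D := by
  have hm : m = 2 * (1 - s) - (1 - s) ^ 2 := by linear_combination hs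
  simp only [sub_mul, mul_sub, one_mul, mul_one, smul_mul_smul_comm, hD.eq, hm, sub_smul]
  module

theorem isIdempotentElem_projection_diag_one {K : Type*} [Field K] (a b : K) :
    IsIdempotentElem
      !![a ^ 2 / (a ^ 2 + b ^ 2), a * b / (a ^ 2 + b ^ 2), 0;
         a * b / (a ^ 2 + b ^ 2), b ^ 2 / (a ^ 2 + b ^ 2), 0;
         0, 0, 1] := by
  -- `s⁻¹ * s * s⁻¹ = s⁻¹` holds also at `s = 0`, where `0⁻¹ = 0` makes both sides vanish.
  have h := mul_inv_mul_cancel (a ^ 2 + b ^ 2)⁻¹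
  rw [inv_inv] at h
  ext i j
  fin_cases i <;> fin_cases j <;>
    simp only [div_eq_mul_inv, Fin.zero_eta, Fin.isValue, Fin.mk_one, Fin.reduceFinMk,
      Matrix.mul_apply, of_apply, cons_val', cons_val_fin_one, cons_val_zero, cons_val_one,
      cons_val, Fin.sum_univ_three, mul_zero, zero_mul, add_zero, zero_add, mul_one]
  · linear_combination a ^ 2 * h
  · linear_combination a * b * h
  · linear_combination a * b * h
  · linear_combination b ^ 2 * h

theorem stmt_12_general (mu m ξ₁ ξ₂ : ℝ) (hmu : 0 < mu) (hm1 : m < 1) :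
    let r : ℝ := Real.sqrt (ξ₁ ^ 2 + ξ₂ ^ 2)
    let D : Matrix (Fin 3) (Fin 3) ℝ :=
      !![ξ₁ ^ 2 / (ξ₁ ^ 2 + ξ₂ ^ 2), ξ₁ * ξ₂ / (ξ₁ ^ 2 + ξ₂ ^ 2), 0;
         ξ₁ * ξ₂ / (ξ₁ ^ 2 + ξ₂ ^ 2), ξ₂ ^ 2 / (ξ₁ ^ 2 + ξ₂ ^ 2), 0;
         0, 0, 1]
    let q : Matrix (Fin 3) (Fin 3) ℝ :=
      (2 * mu * r) ^ (-(1 : ℝ) / 2) • (1 - (1 - Real.sqrt (1 - m)) • D)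
    q * q = (1 / (2 * mu * r)) • (1 - m • D) := by
  intro r D q
  have hr : 0 ≤ 2 * mu * r := by positivity
  rw [smul_mul_smul_comm, ← sq, Real.rpow_neg_one_half_sq hr,
    one_sub_smul_mul_self_of_isIdempotentElem (isIdempotentElem_projection_diag_one ξ₁ ξ₂)
      (Real.sq_sqrt (sub_nonneg.mpr hm1.le))]

/-- The matrix `q(ξ) = (2μ|ξ|)^{-1/2}(E - (1-√(1-m))·diag(L(ξ),1))` is a square
root of the single layer principal symbol `(1/(2μ|ξ|))(E - m·diag(L(ξ),1))`. -/
theorem stmt_12 (mu m ξ₁ ξ₂ : ℝ) (hmu : 0 < mu) (hm0 : 0 < m) (hm1 : m < 1)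
    (hξ : (ξ₁, ξ₂) ≠ (0, 0)) :
    let r : ℝ := Real.sqrt (ξ₁ ^ 2 + ξ₂ ^ 2)
    let D : Matrix (Fin 3) (Fin 3) ℝ :=
      !![ξ₁ ^ 2 / (ξ₁ ^ 2 + ξ₂ ^ 2), ξ₁ * ξ₂ / (ξ₁ ^ 2 + ξ₂ ^ 2), 0;
         ξ₁ * ξ₂ / (ξ₁ ^ 2 + ξ₂ ^ 2), ξ₂ ^ 2 / (ξ₁ ^ 2 + ξ₂ ^ 2), 0;
         0, 0, 1]
    let q : Matrix (Fin 3) (Fin 3) ℝ :=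
      (2 * mu * r) ^ (-(1 : ℝ) / 2) • (1 - (1 - Real.sqrt (1 - m)) • D)
    q * q = (1 / (2 * mu * r)) • (1 - m • D) :=
  stmt_12_general mu m ξ₁ ξ₂ hmu hm1
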